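/- Let (X,d) be a metric space endowed with a Borel measure μ, let m > 0, λ ∈ [0,m), 1 ≤ p ≤ q < ∞ and C_V, C₁, C₂ > 0. Assume μ(B(x,R)) ≤ C_V · R^m for all x ∈ X and R > 0, and let G : (0,∞) × X × X → ℝ be measurable with 0 ≤ G(t,x,y) ≤ C₁ · t^{−m/2} · exp(−C₂ · d(x,y)²/t) for all t > 0 and x, y, and with ∫_X G(t,x,y) dμ(y) ≤ 1 for all t > 0 and x. Let u₀ : X → ℝ be measurable and N ≥ 0 with ∫_{B(x,R)} |u₀|^p dμ ≤ N^p R^λ for all x, R. Then there exists C > 0, depending only on m, p, q, λ, C_V, C₁ and C₂, such that for all t > 0, x₀ ∈ X and R > 0: ∫_{B(x₀,R)} ( ∫_X G(t,x,y) |u₀(y)| dμ(y) )^q dμ(x) ≤ ( C · t^{−((m−λ)/2)·(1/p − 1/q)} · N )^q · R^λ. -/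

import Mathlib

/-!
Write `P h (x) = ∫ G(t,x,y) h(y) dμ(y)` and `h = |u₀|^p`. Since `G(t,x,·) μ` has mass at most
one, Jensen gives `(P |u₀|)^p ≤ P h`. Cutting `X` into the shells `k√t ≤ d(x,y) < (k+1)√t`, the
Gaussian factor on the `k`-th shell is at most `e^{-C₂k}` while the Morrey bound gives that shell
mass `N^p ((k+1)√t)^λ`; summing, `P h ≤ C N^p t^{(λ-m)/2}` everywhere, and the same computation
with `h = 1` and the volume bound gives `∫ G(t,x,y) dμ(x) ≤ C`. On a ball `B(x₀,R)` we split the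
`y`-integral: on `B(x₀,2R)` Tonelli and this column bound give `C N^p R^λ`; off it `d(x,y) ≥ R`,
so half of the Gaussian exponent yields `e^{-C₂R²/2t}`, which beats `μ(B(x₀,R)) ≤ C_V R^m`
because `λ < m`. Hence `∫_{B(x₀,R)} P h ≤ C N^p R^λ`, and the interpolation
`(P |u₀|)^q ≤ (sup P h)^{(q-p)/p} · P h` integrated over the ball gives the estimate.
-/

open MeasureTheory Metric Set
open scoped ENNReal

lemma rpow_mul_exp_neg_mul_le {θ a s : ℝ} (hθ : 0 < θ) (ha : 0 < a) (hs : 0 ≤ s) :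
    s ^ θ * Real.exp (-(a * s)) ≤ (θ / a) ^ θ * Real.exp (-θ) := by
  have key := Real.rpow_le_rpow (by positivity)
    (Real.mul_exp_neg_le_exp_neg_one (a * s / θ)) hθ.le
  rw [Real.mul_rpow (by positivity) (Real.exp_pos _).le, ← Real.exp_mul, ← Real.exp_mul,
    Real.div_rpow (by positivity) hθ.le, Real.mul_rpow ha.le hs,
    show -(a * s / θ) * θ = -(a * s) by field_simp, neg_one_mul] at key
  have haθ : 0 < a ^ θ := by positivity
  have hθθ : 0 < θ ^ θ := by positivity
  calc s ^ θ * Real.exp (-(a * s))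
      = θ ^ θ / a ^ θ * (a ^ θ * s ^ θ / θ ^ θ * Real.exp (-(a * s))) := by field_simp
    _ ≤ (θ / a) ^ θ * Real.exp (-θ) := by
      rw [Real.div_rpow hθ.le ha.le]; gcongr

lemma rpow_mul_rpow_mul_exp_neg_sq_div_le {m lam a t R : ℝ} (hlam : lam < m) (ha : 0 < a)
    (ht : 0 < t) (hR : 0 < R) :
    t ^ ((lam - m) / 2) * R ^ m * Real.exp (-a * R ^ 2 / t) ≤
      ((m - lam) / 2 / a) ^ ((m - lam) / 2) * Real.exp (-((m - lam) / 2)) * R ^ lam := by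
  have hRm : R ^ m = R ^ (2 * ((m - lam) / 2)) * R ^ lam := by rw [← Real.rpow_add hR]; ring_nf
  have hscale :
      (R ^ 2 / t) ^ ((m - lam) / 2) = t ^ ((lam - m) / 2) * R ^ (2 * ((m - lam) / 2)) := by
    rw [Real.div_rpow (sq_nonneg R) ht.le, ← Real.rpow_natCast_mul hR.le, div_eq_inv_mul,
      ← Real.rpow_neg ht.le]
    ring_nf
  calc t ^ ((lam - m) / 2) * R ^ m * Real.exp (-a * R ^ 2 / t)
      = (R ^ 2 / t) ^ ((m - lam) / 2) * Real.exp (-(a * (R ^ 2 / t))) * R ^ lam := by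
        rw [hscale, hRm]; ring_nf
    _ ≤ _ := mul_le_mul_of_nonneg_right
        (rpow_mul_exp_neg_mul_le (by linarith) ha (by positivity)) (by positivity)

lemma summable_add_one_rpow_mul_exp_neg_pow (ρ : ℝ) {c : ℝ} (hc : 0 < c) :
    Summable fun k : ℕ => ((k : ℝ) + 1) ^ ρ * Real.exp (-c) ^ k := by
  have hr : ‖Real.exp (-c)‖ < 1 := by
    rw [Real.norm_eq_abs, abs_of_pos (Real.exp_pos _), Real.exp_lt_one_iff]; linarith
  set n := ⌈ρ⌉₊
  have hshift : Summable fun k : ℕ => ((k : ℝ) + 1) ^ n * Real.exp (-c) ^ k := by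
    have h := (summable_nat_add_iff 1).mpr (summable_pow_mul_geometric_of_norm_lt_one (R := ℝ) n hr)
    refine (h.div_const (Real.exp (-c))).congr fun k => ?_
    rw [pow_succ, Nat.cast_add_one, mul_div_assoc, mul_div_cancel_right₀ _ (Real.exp_pos _).ne']
  refine hshift.of_nonneg_of_le (fun k => by positivity) fun k => ?_
  gcongr
  calc ((k : ℝ) + 1) ^ ρ ≤ ((k : ℝ) + 1) ^ (n : ℝ) :=
        Real.rpow_le_rpow_of_exponent_le (by linarith [k.cast_nonneg (α := ℝ)]) (Nat.le_ceil ρ)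
    _ = _ := Real.rpow_natCast _ _

noncomputable def shellSum (ρ c : ℝ) : ℝ := ∑' k : ℕ, ((k : ℝ) + 1) ^ ρ * Real.exp (-c) ^ k

lemma shellSum_nonneg (ρ c : ℝ) : 0 ≤ shellSum ρ c :=
  tsum_nonneg fun _ => by positivity

lemma exists_pos_le_rpow (x : ℝ) {q : ℝ} (hq : q ≠ 0) : ∃ C > (0 : ℝ), x ≤ C ^ q :=
  ⟨max x 1 ^ q⁻¹, by positivity,
    by rw [Real.rpow_inv_rpow (by positivity) hq]; exact le_max_left _ _⟩

lemma ofReal_rpow_mul_ofReal_le {α β C N t R p q m lam : ℝ} (hα : 0 ≤ α) (hN : 0 ≤ N)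
    (ht : 0 < t) (hR : 0 ≤ R) (hp : 0 < p) (hpq : p ≤ q) (hC : 0 ≤ C)
    (hαβ : α ^ ((q - p) / p) * β ≤ C ^ q) :
    ENNReal.ofReal (α * N ^ p * t ^ ((lam - m) / 2)) ^ ((q - p) / p) *
        ENNReal.ofReal (β * N ^ p * R ^ lam) ≤
      ENNReal.ofReal ((C * t ^ (-((m - lam) / 2) * (1 / p - 1 / q)) * N) ^ q * R ^ lam) := by
  have hq : 0 < q := hp.trans_le hpq
  have hNq : N ^ (p * ((q - p) / p)) * N ^ p = N ^ q := by
    rw [← Real.rpow_add' hN (by field_simp; linarith)]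
    congr 1
    field_simp
    ring
  have hexp : (lam - m) / 2 * ((q - p) / p) = -((m - lam) / 2) * (1 / p - 1 / q) * q := by
    field_simp
    ring
  rw [ENNReal.ofReal_rpow_of_nonneg (by positivity) (div_nonneg (by linarith) hp.le),
    ← ENNReal.ofReal_mul (by positivity)]
  gcongr ENNReal.ofReal ?_
  calc (α * N ^ p * t ^ ((lam - m) / 2)) ^ ((q - p) / p) * (β * N ^ p * R ^ lam)
      = α ^ ((q - p) / p) * β * ((t ^ (-((m - lam) / 2) * (1 / p - 1 / q)) * N) ^ q * R ^ lam) := by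
        rw [Real.mul_rpow (by positivity) (by positivity), Real.mul_rpow hα (by positivity),
          ← Real.rpow_mul hN, ← Real.rpow_mul ht.le, Real.mul_rpow (by positivity) hN,
          ← Real.rpow_mul ht.le, ← hNq, hexp]
        ring
    _ ≤ C ^ q * ((t ^ (-((m - lam) / 2) * (1 / p - 1 / q)) * N) ^ q * R ^ lam) := by gcongr
    _ = _ := by rw [mul_assoc C, Real.mul_rpow hC (by positivity), mul_assoc]

section Lebesgue

variable {α : Type*} [MeasurableSpace α] {ν : Measure α}

lemma rpow_lintegral_le_lintegral_rpow (hν : ν univ ≤ 1) {p : ℝ} (hp : 1 ≤ p) {f : α → ℝ≥0∞}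
    (hf : AEMeasurable f ν) :
    (∫⁻ a, f a ∂ν) ^ p ≤ ∫⁻ a, f a ^ p ∂ν := by
  have hHolder := eLpNorm'_le_eLpNorm'_mul_rpow_measure_univ zero_lt_one hp hf.aestronglyMeasurable
  simp only [eLpNorm'_eq_lintegral_enorm, enorm_eq_self, ENNReal.rpow_one, div_one, one_div]
    at hHolder
  have hν' : ν univ ^ (1 - p⁻¹) ≤ 1 :=
    ENNReal.rpow_le_one hν (sub_nonneg.mpr (inv_le_one_of_one_le₀ hp))
  calc (∫⁻ a, f a ∂ν) ^ p ≤ ((∫⁻ a, f a ^ p ∂ν) ^ p⁻¹) ^ p := by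
        gcongr
        simpa using hHolder.trans (mul_le_of_le_one_right' hν')
    _ = ∫⁻ a, f a ^ p ∂ν := ENNReal.rpow_inv_rpow (by positivity) _

lemma rpow_lintegral_mul_le_lintegral_mul_rpow {K f : α → ℝ≥0∞} (hK : Measurable K)
    (hK1 : ∫⁻ a, K a ∂ν ≤ 1) {p : ℝ} (hp : 1 ≤ p) (hf : Measurable f) :
    (∫⁻ a, K a * f a ∂ν) ^ p ≤ ∫⁻ a, K a * f a ^ p ∂ν := by
  have hν : ν.withDensity K univ ≤ 1 := by
    rwa [withDensity_apply _ MeasurableSet.univ, Measure.restrict_univ]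
  have := rpow_lintegral_le_lintegral_rpow hν hp hf.aemeasurable
  rwa [lintegral_withDensity_eq_lintegral_mul _ hK hf,
    lintegral_withDensity_eq_lintegral_mul _ hK (hf.pow_const p)] at this

lemma lintegral_rpow_le_rpow_mul_lintegral {F P : α → ℝ≥0∞} {S : ℝ≥0∞} {p q : ℝ} (hp : 0 < p)
    (hpq : p ≤ q) (hS : S ≠ ∞) (hFP : ∀ a, F a ^ p ≤ P a) (hPS : ∀ a, P a ≤ S) :
    ∫⁻ a, F a ^ q ∂ν ≤ S ^ ((q - p) / p) * ∫⁻ a, P a ∂ν := by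
  have hs : 0 ≤ (q - p) / p := div_nonneg (by linarith) hp.le
  rw [← lintegral_const_mul' _ _ (ENNReal.rpow_ne_top_of_nonneg hs hS)]
  refine lintegral_mono fun a => ?_
  calc F a ^ q = (F a ^ p) ^ ((q - p) / p) * F a ^ p := by
        rw [← ENNReal.rpow_mul, ← ENNReal.rpow_add_of_nonneg _ _ (by positivity) hp.le]
        congr 1
        field_simp
        ring
    _ ≤ S ^ ((q - p) / p) * P a := by
        gcongr
        · exact (hFP a).trans (hPS a)
        · exact hFP a

end Lebesgue

section GaussianKernel

variable {X : Type*} [MetricSpace X]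

lemma iUnion_ball_succ_mul_diff_ball (z : X) {σ : ℝ} (hσ : 0 < σ) :
    ⋃ k : ℕ, ball z ((k + 1) * σ) \ ball z (k * σ) = univ := by
  refine eq_univ_of_forall fun y => mem_iUnion.mpr ⟨⌊dist y z / σ⌋₊, ?_, ?_⟩
  · rw [mem_ball, ← div_lt_iff₀ hσ]
    exact Nat.lt_floor_add_one _
  · rw [mem_ball, not_lt, ← le_div_iff₀ hσ]
    exact Nat.floor_le (by positivity)

lemma exp_neg_mul_sq_div_le_pow {c t d : ℝ} (hc : 0 ≤ c) (ht : 0 < t) {k : ℕ}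
    (hk : k * √t ≤ d) : Real.exp (-c * d ^ 2 / t) ≤ Real.exp (-c) ^ k := by
  rw [← Real.exp_nat_mul, Real.exp_le_exp]
  have hkd : (k : ℝ) ^ 2 * t ≤ d ^ 2 := by
    have := pow_le_pow_left₀ (by positivity) hk 2
    rwa [mul_pow, Real.sq_sqrt ht.le] at this
  have hk2 : (k : ℝ) ≤ k ^ 2 := by
    exact_mod_cast Nat.le_self_pow two_ne_zero k
  rw [neg_mul, neg_div, mul_neg, neg_le_neg_iff, le_div_iff₀ ht]
  nlinarith [mul_le_mul_of_nonneg_left hk2 (mul_nonneg hc ht.le), mul_le_mul_of_nonneg_left hkd hc]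

def HasGaussianBound (G : ℝ → X → X → ℝ) (m C₁ C₂ : ℝ) : Prop :=
  ∀ t > (0 : ℝ), ∀ x y : X, G t x y ≤ C₁ * t ^ (-(m / 2)) * Real.exp (-C₂ * dist x y ^ 2 / t)

lemma HasGaussianBound.flip {G : ℝ → X → X → ℝ} {m C₁ C₂ : ℝ} (hG : HasGaussianBound G m C₁ C₂) :
    HasGaussianBound (fun t x y => G t y x) m C₁ C₂ :=
  fun t ht x y => by simpa only [dist_comm] using hG t ht y x

variable [MeasurableSpace X] {μ : Measure X}

lemma isFiniteMeasure_restrict_ball {C_V m : ℝ}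
    (hvol : ∀ x r, 0 < r → μ (ball x r) ≤ ENNReal.ofReal (C_V * r ^ m)) (x : X) {r : ℝ}
    (hr : 0 < r) : IsFiniteMeasure (μ.restrict (ball x r)) :=
  isFiniteMeasure_restrict.mpr ((hvol x r hr).trans_lt ENNReal.ofReal_lt_top).ne

variable [BorelSpace X]

lemma setLIntegral_ball_diff_ball_exp_neg_dist_sq_mul_le {ρ c A t : ℝ} (hc : 0 ≤ c) (ht : 0 < t)
    {h : X → ℝ≥0∞}
    (hmor : ∀ z r, 0 < r → ∫⁻ y in ball z r, h y ∂μ ≤ ENNReal.ofReal (A * r ^ ρ)) (z : X) (k : ℕ) :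
    ∫⁻ y in ball z ((k + 1) * √t) \ ball z (k * √t),
        ENNReal.ofReal (Real.exp (-c * dist z y ^ 2 / t)) * h y ∂μ ≤
      ENNReal.ofReal (((k : ℝ) + 1) ^ ρ * Real.exp (-c) ^ k * (A * t ^ (ρ / 2))) := by
  have hsqrt : √t ^ ρ = t ^ (ρ / 2) := by rw [Real.sqrt_eq_rpow, ← Real.rpow_mul ht.le]; ring_nf
  calc _ ≤ ∫⁻ y in ball z ((k + 1) * √t), ENNReal.ofReal (Real.exp (-c) ^ k) * h y ∂μ := by
        refine (setLIntegral_mono' (measurableSet_ball.diff measurableSet_ball)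
          fun y hy => ?_).trans (lintegral_mono_set sdiff_subset)
        have hy' := hy.2
        rw [mem_ball, not_lt, dist_comm] at hy'
        gcongr
        exact exp_neg_mul_sq_div_le_pow hc ht hy'
    _ = ENNReal.ofReal (Real.exp (-c) ^ k) * ∫⁻ y in ball z ((k + 1) * √t), h y ∂μ :=
        lintegral_const_mul' _ _ ENNReal.ofReal_ne_top
    _ ≤ ENNReal.ofReal (Real.exp (-c) ^ k) * ENNReal.ofReal (A * ((k + 1) * √t) ^ ρ) := by
        gcongr; exact hmor z _ (by positivity)
    _ = _ := by
        rw [← ENNReal.ofReal_mul (by positivity), Real.mul_rpow (by positivity) (by positivity),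
          hsqrt]
        ring_nf

lemma lintegral_exp_neg_dist_sq_mul_le {ρ c A t : ℝ} (hc : 0 < c) (hA : 0 ≤ A) (ht : 0 < t)
    {h : X → ℝ≥0∞}
    (hmor : ∀ z r, 0 < r → ∫⁻ y in ball z r, h y ∂μ ≤ ENNReal.ofReal (A * r ^ ρ)) (z : X) :
    ∫⁻ y, ENNReal.ofReal (Real.exp (-c * dist z y ^ 2 / t)) * h y ∂μ ≤
      ENNReal.ofReal (shellSum ρ c * A * t ^ (ρ / 2)) := by
  calc ∫⁻ y, ENNReal.ofReal (Real.exp (-c * dist z y ^ 2 / t)) * h y ∂μ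
      = ∫⁻ y in ⋃ k : ℕ, ball z ((k + 1) * √t) \ ball z (k * √t),
          ENNReal.ofReal (Real.exp (-c * dist z y ^ 2 / t)) * h y ∂μ := by
        rw [iUnion_ball_succ_mul_diff_ball z (Real.sqrt_pos.mpr ht), Measure.restrict_univ]
    _ ≤ ∑' k : ℕ, ∫⁻ y in ball z ((k + 1) * √t) \ ball z (k * √t),
          ENNReal.ofReal (Real.exp (-c * dist z y ^ 2 / t)) * h y ∂μ :=
        lintegral_iUnion_le _ _
    _ ≤ ∑' k : ℕ, ENNReal.ofReal (((k : ℝ) + 1) ^ ρ * Real.exp (-c) ^ k * (A * t ^ (ρ / 2))) :=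
        ENNReal.tsum_le_tsum
          (setLIntegral_ball_diff_ball_exp_neg_dist_sq_mul_le hc.le ht hmor z)
    _ = ENNReal.ofReal (shellSum ρ c * A * t ^ (ρ / 2)) := by
        rw [← ENNReal.ofReal_tsum_of_nonneg (fun k => by positivity)
          ((summable_add_one_rpow_mul_exp_neg_pow ρ hc).mul_right _), tsum_mul_right, mul_assoc]
        rfl

namespace HasGaussianBound

variable {G : ℝ → X → X → ℝ} {m C₁ C₂ : ℝ}

lemma lintegral_mul_le (hG : HasGaussianBound G m C₁ C₂) (hC₂ : 0 < C₂) {ρ A t : ℝ}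
    (hA : 0 ≤ A) (ht : 0 < t) {h : X → ℝ≥0∞}
    (hmor : ∀ z r, 0 < r → ∫⁻ y in ball z r, h y ∂μ ≤ ENNReal.ofReal (A * r ^ ρ)) (x : X) :
    ∫⁻ y, ENNReal.ofReal (G t x y) * h y ∂μ ≤
      ENNReal.ofReal (C₁ * shellSum ρ C₂ * A * t ^ ((ρ - m) / 2)) := by
  calc ∫⁻ y, ENNReal.ofReal (G t x y) * h y ∂μ
      ≤ ∫⁻ y, ENNReal.ofReal (C₁ * t ^ (-(m / 2))) *
          (ENNReal.ofReal (Real.exp (-C₂ * dist x y ^ 2 / t)) * h y) ∂μ := by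
        refine lintegral_mono fun y => ?_
        rw [← mul_assoc, ← ENNReal.ofReal_mul' (Real.exp_pos _).le]
        gcongr
        exact hG t ht x y
    _ = ENNReal.ofReal (C₁ * t ^ (-(m / 2))) *
          ∫⁻ y, ENNReal.ofReal (Real.exp (-C₂ * dist x y ^ 2 / t)) * h y ∂μ :=
        lintegral_const_mul' _ _ ENNReal.ofReal_ne_top
    _ ≤ ENNReal.ofReal (C₁ * t ^ (-(m / 2))) *
          ENNReal.ofReal (shellSum ρ C₂ * A * t ^ (ρ / 2)) := by
        gcongr
        exact lintegral_exp_neg_dist_sq_mul_le hC₂ hA ht hmor x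
    _ = _ := by
        have := shellSum_nonneg ρ C₂
        rw [← ENNReal.ofReal_mul' (by positivity), show (ρ - m) / 2 = -(m / 2) + ρ / 2 by ring,
          Real.rpow_add ht]
        ring_nf

lemma setLIntegral_mul_le_of_le_dist (hG : HasGaussianBound G m C₁ C₂) (hC₁ : 0 ≤ C₁)
    (hC₂ : 0 < C₂) {ρ A t : ℝ} (hA : 0 ≤ A) (ht : 0 < t) {h : X → ℝ≥0∞}
    (hmor : ∀ z r, 0 < r → ∫⁻ y in ball z r, h y ∂μ ≤ ENNReal.ofReal (A * r ^ ρ))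
    {x : X} {R : ℝ} (hR : 0 ≤ R) {s : Set X} (hs : MeasurableSet s)
    (hsR : ∀ y ∈ s, R ≤ dist x y) :
    ∫⁻ y in s, ENNReal.ofReal (G t x y) * h y ∂μ ≤ ENNReal.ofReal (Real.exp (-(C₂ / 2) * R ^ 2 / t)
      * (C₁ * shellSum ρ (C₂ / 2) * A * t ^ ((ρ - m) / 2))) := by
  set g : ℝ → X → X → ℝ := fun t x y =>
    C₁ * t ^ (-(m / 2)) * Real.exp (-(C₂ / 2) * dist x y ^ 2 / t)
  have hg : HasGaussianBound g m C₁ (C₂ / 2) := fun _ _ _ _ => le_rfl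
  calc ∫⁻ y in s, ENNReal.ofReal (G t x y) * h y ∂μ
      ≤ ∫⁻ y in s, ENNReal.ofReal (Real.exp (-(C₂ / 2) * R ^ 2 / t)) *
          (ENNReal.ofReal (g t x y) * h y) ∂μ := by
        refine setLIntegral_mono' hs fun y hy => ?_
        rw [← mul_assoc, ← ENNReal.ofReal_mul (Real.exp_pos _).le]
        gcongr
        have hRd : R ^ 2 ≤ dist x y ^ 2 := pow_le_pow_left₀ hR (hsR y hy) 2
        calc G t x y ≤ C₁ * t ^ (-(m / 2)) * Real.exp (-C₂ * dist x y ^ 2 / t) := hG t ht x y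
          _ ≤ C₁ * t ^ (-(m / 2)) *
              Real.exp (-(C₂ / 2) * R ^ 2 / t + -(C₂ / 2) * dist x y ^ 2 / t) := by
            gcongr
            rw [← add_div, div_le_div_iff_of_pos_right ht]
            nlinarith
          _ = _ := by rw [Real.exp_add]; ring
    _ ≤ ∫⁻ y, ENNReal.ofReal (Real.exp (-(C₂ / 2) * R ^ 2 / t)) *
          (ENNReal.ofReal (g t x y) * h y) ∂μ := setLIntegral_le_lintegral _ _
    _ = ENNReal.ofReal (Real.exp (-(C₂ / 2) * R ^ 2 / t)) *
          ∫⁻ y, ENNReal.ofReal (g t x y) * h y ∂μ := lintegral_const_mul' _ _ ENNReal.ofReal_ne_top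
    _ ≤ ENNReal.ofReal (Real.exp (-(C₂ / 2) * R ^ 2 / t)) *
          ENNReal.ofReal (C₁ * shellSum ρ (C₂ / 2) * A * t ^ ((ρ - m) / 2)) := by
        gcongr
        exact hg.lintegral_mul_le (by positivity) hA ht hmor x
    _ = _ := (ENNReal.ofReal_mul (Real.exp_pos _).le).symm

lemma setLIntegral_setLIntegral_mul_le (hG : HasGaussianBound G m C₁ C₂) (hC₂ : 0 < C₂)
    {C_V t : ℝ} (hCV : 0 ≤ C_V)
    (hvol : ∀ x r, 0 < r → μ (ball x r) ≤ ENNReal.ofReal (C_V * r ^ m)) (ht : 0 < t)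
    (hGt : Measurable fun p : X × X => G t p.1 p.2) {h : X → ℝ≥0∞} (hh : Measurable h)
    (x₀ : X) {R R' : ℝ} (hR : 0 < R) (hR' : 0 < R') :
    ∫⁻ x in ball x₀ R, ∫⁻ y in ball x₀ R', ENNReal.ofReal (G t x y) * h y ∂μ ∂μ ≤
      ENNReal.ofReal (C₁ * shellSum m C₂ * C_V) * ∫⁻ y in ball x₀ R', h y ∂μ := by
  have := isFiniteMeasure_restrict_ball hvol x₀ hR
  have := isFiniteMeasure_restrict_ball hvol x₀ hR'
  have hcolumn : ∀ y, ∫⁻ x, ENNReal.ofReal (G t x y) ∂μ ≤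
      ENNReal.ofReal (C₁ * shellSum m C₂ * C_V) := fun y => by
    simpa only [sub_self, zero_div, Real.rpow_zero, mul_one] using
      hG.flip.lintegral_mul_le (μ := μ) (ρ := m) (h := fun _ => 1) hC₂ hCV ht
        (fun z r hr => by rw [setLIntegral_one]; exact hvol z r hr) y
  rw [lintegral_lintegral_swap (hGt.ennreal_ofReal.mul (hh.comp measurable_snd)).aemeasurable]
  calc ∫⁻ y in ball x₀ R', ∫⁻ x in ball x₀ R, ENNReal.ofReal (G t x y) * h y ∂μ ∂μ
      = ∫⁻ y in ball x₀ R', (∫⁻ x in ball x₀ R, ENNReal.ofReal (G t x y) ∂μ) * h y ∂μ :=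
        lintegral_congr fun y => lintegral_mul_const _
          (hGt.comp (measurable_id.prodMk measurable_const)).ennreal_ofReal
    _ ≤ ∫⁻ y in ball x₀ R', ENNReal.ofReal (C₁ * shellSum m C₂ * C_V) * h y ∂μ :=
        lintegral_mono fun y => by
          gcongr
          exact (setLIntegral_le_lintegral _ _).trans (hcolumn y)
    _ = _ := lintegral_const_mul' _ _ ENNReal.ofReal_ne_top

lemma setLIntegral_setLIntegral_compl_mul_le (hG : HasGaussianBound G m C₁ C₂) (hC₁ : 0 ≤ C₁)
    (hC₂ : 0 < C₂) {lam A C_V t : ℝ} (hlam : lam < m) (hA : 0 ≤ A) (hCV : 0 ≤ C_V)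
    (hvol : ∀ x r, 0 < r → μ (ball x r) ≤ ENNReal.ofReal (C_V * r ^ m)) (ht : 0 < t)
    {h : X → ℝ≥0∞}
    (hmor : ∀ z r, 0 < r → ∫⁻ y in ball z r, h y ∂μ ≤ ENNReal.ofReal (A * r ^ lam))
    (x₀ : X) {R : ℝ} (hR : 0 < R) :
    ∫⁻ x in ball x₀ R, ∫⁻ y in (ball x₀ (2 * R))ᶜ, ENNReal.ofReal (G t x y) * h y ∂μ ∂μ ≤
      ENNReal.ofReal (C_V * (C₁ * shellSum lam (C₂ / 2)) * (((m - lam) / 2 / (C₂ / 2)) ^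
        ((m - lam) / 2) * Real.exp (-((m - lam) / 2))) * A * R ^ lam) := by
  set tail := Real.exp (-(C₂ / 2) * R ^ 2 / t) * (C₁ * shellSum lam (C₂ / 2) * A *
    t ^ ((lam - m) / 2))
  have hfar : ∀ x ∈ ball x₀ R, ∀ y ∈ (ball x₀ (2 * R))ᶜ, R ≤ dist x y := by
    intro x hx y hy
    rw [mem_ball] at hx
    rw [mem_compl_iff, mem_ball, not_lt] at hy
    linarith [dist_triangle y x x₀, dist_comm x y]
  have := shellSum_nonneg lam (C₂ / 2)
  calc ∫⁻ x in ball x₀ R, ∫⁻ y in (ball x₀ (2 * R))ᶜ, ENNReal.ofReal (G t x y) * h y ∂μ ∂μ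
      ≤ ∫⁻ _ in ball x₀ R, ENNReal.ofReal tail ∂μ :=
        setLIntegral_mono' measurableSet_ball fun x hx =>
          hG.setLIntegral_mul_le_of_le_dist hC₁ hC₂ hA ht hmor hR.le
            measurableSet_ball.compl (hfar x hx)
    _ = ENNReal.ofReal tail * μ (ball x₀ R) := setLIntegral_const _ _
    _ ≤ ENNReal.ofReal tail * ENNReal.ofReal (C_V * R ^ m) := by gcongr; exact hvol x₀ R hR
    _ = ENNReal.ofReal (C_V * (C₁ * shellSum lam (C₂ / 2) * A) *
          (t ^ ((lam - m) / 2) * R ^ m * Real.exp (-(C₂ / 2) * R ^ 2 / t))) := by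
        rw [← ENNReal.ofReal_mul (by positivity)]
        congr 1
        ring
    _ ≤ _ := by
        gcongr ENNReal.ofReal ?_
        calc _ ≤ C_V * (C₁ * shellSum lam (C₂ / 2) * A) * (((m - lam) / 2 / (C₂ / 2)) ^
              ((m - lam) / 2) * Real.exp (-((m - lam) / 2)) * R ^ lam) :=
              mul_le_mul_of_nonneg_left
                (rpow_mul_rpow_mul_exp_neg_sq_div_le hlam (by positivity) ht hR) (by positivity)
          _ = _ := by ring

lemma exists_setLIntegral_lintegral_mul_le (hG : HasGaussianBound G m C₁ C₂)
    (hGmeas : ∀ t, Measurable fun w : X × X => G t w.1 w.2) (hC₁ : 0 ≤ C₁) (hC₂ : 0 < C₂)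
    {lam C_V : ℝ} (hlam : lam < m) (hCV : 0 ≤ C_V)
    (hvol : ∀ x r, 0 < r → μ (ball x r) ≤ ENNReal.ofReal (C_V * r ^ m)) :
    ∃ β : ℝ, ∀ h : X → ℝ≥0∞, Measurable h → ∀ A : ℝ, 0 ≤ A →
      (∀ z r, 0 < r → ∫⁻ y in ball z r, h y ∂μ ≤ ENNReal.ofReal (A * r ^ lam)) →
      ∀ t > (0 : ℝ), ∀ (x₀ : X) (R : ℝ), 0 < R →
        ∫⁻ x in ball x₀ R, ∫⁻ y, ENNReal.ofReal (G t x y) * h y ∂μ ∂μ ≤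
          ENNReal.ofReal (β * A * R ^ lam) := by
  refine ⟨C₁ * shellSum m C₂ * C_V * 2 ^ lam + C_V * (C₁ * shellSum lam (C₂ / 2)) *
    (((m - lam) / 2 / (C₂ / 2)) ^ ((m - lam) / 2) * Real.exp (-((m - lam) / 2))),
    fun h hh A hA hmor t ht x₀ R hR => ?_⟩
  have := isFiniteMeasure_restrict_ball hvol x₀ (by positivity : 0 < 2 * R)
  have hnear_meas :
      Measurable fun x => ∫⁻ y in ball x₀ (2 * R), ENNReal.ofReal (G t x y) * h y ∂μ :=
    ((hGmeas t).ennreal_ofReal.mul (hh.comp measurable_snd)).lintegral_prod_right'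
  have := shellSum_nonneg m C₂
  have := shellSum_nonneg lam (C₂ / 2)
  have := sub_pos.mpr hlam
  calc ∫⁻ x in ball x₀ R, ∫⁻ y, ENNReal.ofReal (G t x y) * h y ∂μ ∂μ
      = ∫⁻ x in ball x₀ R, ∫⁻ y in ball x₀ (2 * R), ENNReal.ofReal (G t x y) * h y ∂μ ∂μ +
          ∫⁻ x in ball x₀ R, ∫⁻ y in (ball x₀ (2 * R))ᶜ, ENNReal.ofReal (G t x y) * h y ∂μ ∂μ := by
        rw [← lintegral_add_left hnear_meas]
        exact lintegral_congr fun x => (lintegral_add_compl _ measurableSet_ball).symm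
    _ ≤ ENNReal.ofReal (C₁ * shellSum m C₂ * C_V) * ENNReal.ofReal (A * (2 * R) ^ lam) +
          ENNReal.ofReal (C_V * (C₁ * shellSum lam (C₂ / 2)) * (((m - lam) / 2 / (C₂ / 2)) ^
            ((m - lam) / 2) * Real.exp (-((m - lam) / 2))) * A * R ^ lam) := by
        gcongr
        · exact (hG.setLIntegral_setLIntegral_mul_le hC₂ hCV hvol ht (hGmeas t) hh x₀ hR
            (by positivity)).trans (by gcongr; exact hmor x₀ _ (by positivity))
        · exact hG.setLIntegral_setLIntegral_compl_mul_le hC₁ hC₂ hlam hA hCV hvol ht hmor x₀ hR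
    _ = _ := by
        rw [← ENNReal.ofReal_mul (by positivity), ← ENNReal.ofReal_add (by positivity)
          (by positivity), Real.mul_rpow zero_le_two hR.le]
        congr 1
        ring

end HasGaussianBound

end GaussianKernel

theorem dispersive_Morrey_ricci_flat_general
    {X : Type*} [MetricSpace X] [MeasurableSpace X] [BorelSpace X]
    (μ : Measure X) (m lam p q C_V C₁ C₂ N : ℝ)
    (hlamm : lam < m)
    (hp : 1 ≤ p) (hpq : p ≤ q)
    (hCV : 0 < C_V) (hC₁ : 0 < C₁) (hC₂ : 0 < C₂)
    (hvol : ∀ (x : X) (R : ℝ), 0 < R → μ (Metric.ball x R) ≤ ENNReal.ofReal (C_V * R ^ m))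
    (G : ℝ → X → X → ℝ)
    (hGmeas : Measurable fun w : ℝ × X × X => G w.1 w.2.1 w.2.2)
    (hGbd : ∀ t > (0 : ℝ), ∀ x y : X, G t x y ≤
      C₁ * t ^ (-(m / 2)) * Real.exp (-C₂ * dist x y ^ 2 / t))
    (hGmarkov : ∀ t > (0 : ℝ), ∀ x : X, ∫⁻ y, ENNReal.ofReal (G t x y) ∂μ ≤ 1)
    (u₀ : X → ℝ) (hu₀ : Measurable u₀) (hN : 0 ≤ N)
    (hmor : ∀ (x : X) (R : ℝ), 0 < R →
      ∫⁻ y in Metric.ball x R, ENNReal.ofReal (|u₀ y| ^ p) ∂μ ≤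
        ENNReal.ofReal (N ^ p * R ^ lam)) :
    ∃ C > (0 : ℝ), ∀ t > (0 : ℝ), ∀ (x₀ : X) (R : ℝ), 0 < R →
      ∫⁻ x in Metric.ball x₀ R, (∫⁻ y, ENNReal.ofReal (G t x y * |u₀ y|) ∂μ) ^ q ∂μ ≤
        ENNReal.ofReal ((C * t ^ (-((m - lam) / 2) * (1 / p - 1 / q)) * N) ^ q * R ^ lam) := by
  have hp0 : 0 < p := by linarith
  have hGt : ∀ t, Measurable fun w : X × X => G t w.1 w.2 := fun t =>
    hGmeas.comp (measurable_const.prodMk measurable_id)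
  obtain ⟨β, hβ⟩ := HasGaussianBound.exists_setLIntegral_lintegral_mul_le hGbd hGt hC₁.le hC₂
    hlamm hCV.le hvol
  set α := C₁ * shellSum lam C₂
  obtain ⟨C, hC0, hC⟩ := exists_pos_le_rpow (α ^ ((q - p) / p) * β) (by linarith : q ≠ 0)
  refine ⟨C, hC0, fun t ht x₀ R hR => ?_⟩
  have hJensen : ∀ x, (∫⁻ y, ENNReal.ofReal (G t x y * |u₀ y|) ∂μ) ^ p ≤
      ∫⁻ y, ENNReal.ofReal (G t x y) * ENNReal.ofReal (|u₀ y| ^ p) ∂μ := fun x => by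
    simp_rw [ENNReal.ofReal_mul' (abs_nonneg _),
      ← ENNReal.ofReal_rpow_of_nonneg (abs_nonneg _) hp0.le]
    exact rpow_lintegral_mul_le_lintegral_mul_rpow
      ((hGt t).comp (measurable_const.prodMk measurable_id)).ennreal_ofReal (hGmarkov t ht x) hp
      hu₀.abs.ennreal_ofReal
  have hsup : ∀ x, ∫⁻ y, ENNReal.ofReal (G t x y) * ENNReal.ofReal (|u₀ y| ^ p) ∂μ ≤
      ENNReal.ofReal (α * N ^ p * t ^ ((lam - m) / 2)) := fun x =>
    HasGaussianBound.lintegral_mul_le hGbd hC₂ (Real.rpow_nonneg hN p) ht hmor x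
  calc ∫⁻ x in ball x₀ R, (∫⁻ y, ENNReal.ofReal (G t x y * |u₀ y|) ∂μ) ^ q ∂μ
      ≤ ENNReal.ofReal (α * N ^ p * t ^ ((lam - m) / 2)) ^ ((q - p) / p) *
          ∫⁻ x in ball x₀ R, ∫⁻ y, ENNReal.ofReal (G t x y) * ENNReal.ofReal (|u₀ y| ^ p) ∂μ ∂μ :=
        lintegral_rpow_le_rpow_mul_lintegral hp0 hpq ENNReal.ofReal_ne_top hJensen hsup
    _ ≤ ENNReal.ofReal (α * N ^ p * t ^ ((lam - m) / 2)) ^ ((q - p) / p) *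
          ENNReal.ofReal (β * N ^ p * R ^ lam) := by
        gcongr
        exact hβ _ (hu₀.abs.pow_const p).ennreal_ofReal _ (Real.rpow_nonneg hN p) hmor t ht x₀ R hR
    _ ≤ _ := ofReal_rpow_mul_ofReal_le (mul_nonneg hC₁.le (shellSum_nonneg lam C₂)) hN ht hR.le
        hp0 hpq hC0.le hC

/-- Abstract form of the dispersive estimate `M_{p,λ} → M_{q,λ}` for the heat
semigroup on Ricci-flat manifolds (Theorem 7.2): a Markovian kernel with the
global Gaussian bound `C₁ t^{-m/2} e^{-C₂ d(x,y)²/t}` under the Euclidean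
volume upper bound `μ(B(x,R)) ≤ C_V R^m`. -/
theorem dispersive_Morrey_ricci_flat
    {X : Type*} [MetricSpace X] [MeasurableSpace X] [BorelSpace X]
    (μ : Measure X) (m lam p q C_V C₁ C₂ N : ℝ)
    (hm : 0 < m) (hlam0 : 0 ≤ lam) (hlamm : lam < m)
    (hp : 1 ≤ p) (hpq : p ≤ q)
    (hCV : 0 < C_V) (hC₁ : 0 < C₁) (hC₂ : 0 < C₂)
    (hvol : ∀ (x : X) (R : ℝ), 0 < R → μ (Metric.ball x R) ≤ ENNReal.ofReal (C_V * R ^ m))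
    (G : ℝ → X → X → ℝ)
    (hGmeas : Measurable fun w : ℝ × X × X => G w.1 w.2.1 w.2.2)
    (hG0 : ∀ t > (0 : ℝ), ∀ x y : X, 0 ≤ G t x y)
    (hGbd : ∀ t > (0 : ℝ), ∀ x y : X, G t x y ≤
      C₁ * t ^ (-(m / 2)) * Real.exp (-C₂ * dist x y ^ 2 / t))
    (hGmarkov : ∀ t > (0 : ℝ), ∀ x : X, ∫⁻ y, ENNReal.ofReal (G t x y) ∂μ ≤ 1)
    (u₀ : X → ℝ) (hu₀ : Measurable u₀) (hN : 0 ≤ N)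
    (hmor : ∀ (x : X) (R : ℝ), 0 < R →
      ∫⁻ y in Metric.ball x R, ENNReal.ofReal (|u₀ y| ^ p) ∂μ ≤
        ENNReal.ofReal (N ^ p * R ^ lam)) :
    ∃ C > (0 : ℝ), ∀ t > (0 : ℝ), ∀ (x₀ : X) (R : ℝ), 0 < R →
      ∫⁻ x in Metric.ball x₀ R, (∫⁻ y, ENNReal.ofReal (G t x y * |u₀ y|) ∂μ) ^ q ∂μ ≤
        ENNReal.ofReal ((C * t ^ (-((m - lam) / 2) * (1 / p - 1 / q)) * N) ^ q * R ^ lam) :=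
  dispersive_Morrey_ricci_flat_general μ m lam p q C_V C₁ C₂ N hlamm hp hpq hCV hC₁ hC₂ hvol G
    hGmeas hGbd hGmarkov u₀ hu₀ hN hmor
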